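/- For independent Gaussian random variables μ_1 ~ N(ν_1, σ_0²) and μ_2 ~ N(ν_2, σ_0²) and constants c_1 ≥ 0 and c_2 real, the expectation E[exp(-c_1(μ_1-μ_2)² - c_2(μ_1-μ_2)(ν_1-ν_2)/σ_0²)] equals (1/√(4c_1σ_0²+1)) · exp(-(ν_2-ν_1)²(c_1σ_0² - c_2² + c_2)/(σ_0²(4c_1σ_0²+1))). -/

import Mathlib

open MeasureTheory ProbabilityTheory Real

private lemma rexp_quadratic' {A : ℝ} (hA : 0 < A) (B C : ℝ) :
    ∫ x : ℝ, rexp (-A * x ^ 2 + B * x + C) = Real.sqrt (π / A) * rexp (C + B ^ 2 / (4 * A)) := by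
  have h := integral_cexp_quadratic (b := (-A : ℂ)) (by simpa using hA) (B : ℂ) (C : ℂ)
  have h2 : (∫ x : ℝ, Complex.exp ((-A : ℂ) * x ^ 2 + B * x + C))
      = ((∫ x : ℝ, rexp (-A * x ^ 2 + B * x + C) : ℝ) : ℂ) := by
    calc (∫ x : ℝ, Complex.exp ((-A : ℂ) * x ^ 2 + B * x + C))
        = ∫ x : ℝ, ((rexp (-A * x ^ 2 + B * x + C) : ℝ) : ℂ) := by
          refine integral_congr_ae (Filter.Eventually.of_forall fun x => ?_)
          simp only [Complex.ofReal_exp]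
          push_cast
          ring_nf
      _ = ((∫ x : ℝ, rexp (-A * x ^ 2 + B * x + C) : ℝ) : ℂ) := integral_ofReal
  rw [h2] at h
  have h3 : ((π : ℂ) / -(-A : ℂ)) ^ (1 / 2 : ℂ) = (Real.sqrt (π / A) : ℂ) := by
    rw [neg_neg, show ((π : ℂ) / A) = ((π / A : ℝ) : ℂ) by push_cast; ring,
      show (1 / 2 : ℂ) = ((1 / 2 : ℝ) : ℂ) by norm_num,
      ← Complex.ofReal_cpow (by positivity), Real.sqrt_eq_rpow]
  rw [h3] at h
  have h4 : ((C : ℂ) - B ^ 2 / (4 * (-A : ℂ))) = ((C + B ^ 2 / (4 * A) : ℝ) : ℂ) := by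
    have : (A : ℂ) ≠ 0 := by exact_mod_cast hA.ne'
    push_cast
    field_simp
    ring
  rw [h4, ← Complex.ofReal_exp, ← Complex.ofReal_mul] at h
  exact_mod_cast h

private lemma integral_gaussianReal_mul' (m σ : ℝ) (hσ : 0 < σ) (f : ℝ → ℝ) :
    ∫ x, f x ∂(gaussianReal m ⟨σ ^ 2, sq_nonneg σ⟩)
      = ∫ x, gaussianPDFReal m ⟨σ ^ 2, sq_nonneg σ⟩ x * f x := by
  have hv : (⟨σ ^ 2, sq_nonneg σ⟩ : NNReal) ≠ 0 := by
    intro h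
    have h' := congrArg Subtype.val h
    exact (pow_pos hσ 2).ne' h'
  rw [integral_gaussianReal_eq_integral_smul hv]
  refine integral_congr_ae (Filter.Eventually.of_forall fun x => ?_)
  simp [NNReal.smul_def, Real.coe_toNNReal _ (gaussianPDFReal_nonneg _ _ _)]

private lemma gauss_int' (m σ a b : ℝ) (hσ : 0 < σ) (ha : 0 ≤ a) :
    ∫ z, rexp (-a * z ^ 2 + b * z) ∂(gaussianReal m ⟨σ ^ 2, sq_nonneg σ⟩)
      = (Real.sqrt (2 * a * σ ^ 2 + 1))⁻¹ *
        rexp ((σ ^ 2 * b ^ 2 + 2 * b * m - 2 * a * m ^ 2) / (2 * (2 * a * σ ^ 2 + 1))) := by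
  have hσ2 : (0:ℝ) < σ ^ 2 := pow_pos hσ 2
  have hD : (0:ℝ) < 2 * a * σ ^ 2 + 1 := by positivity
  have hA : (0:ℝ) < a + 1 / (2 * σ ^ 2) := by positivity
  rw [integral_gaussianReal_mul' m σ hσ]
  have key : ∀ z : ℝ, gaussianPDFReal m ⟨σ ^ 2, sq_nonneg σ⟩ z * rexp (-a * z ^ 2 + b * z)
      = (Real.sqrt (2 * π * σ ^ 2))⁻¹ *
        rexp (-(a + 1 / (2 * σ ^ 2)) * z ^ 2 + (b + m / σ ^ 2) * z + (-m ^ 2 / (2 * σ ^ 2))) := by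
    intro z
    unfold gaussianPDFReal
    change (√(2 * π * σ ^ 2))⁻¹ * rexp (-(z - m) ^ 2 / (2 * σ ^ 2)) * rexp (-a * z ^ 2 + b * z) = _
    rw [mul_assoc, ← Real.exp_add]
    congr 1
    field_simp
    ring
  simp_rw [key]
  rw [integral_const_mul, rexp_quadratic' hA]
  have pref : (Real.sqrt (2 * π * σ ^ 2))⁻¹ * Real.sqrt (π / (a + 1 / (2 * σ ^ 2)))
      = (Real.sqrt (2 * a * σ ^ 2 + 1))⁻¹ := by
    have h1 : π / (a + 1 / (2 * σ ^ 2)) = (2 * π * σ ^ 2) / (2 * a * σ ^ 2 + 1) := by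
      field_simp
    rw [h1, Real.sqrt_div (by positivity)]
    rw [div_eq_mul_inv, ← mul_assoc, inv_mul_cancel₀ (by positivity), one_mul]
  have expeq : (-m ^ 2 / (2 * σ ^ 2) + (b + m / σ ^ 2) ^ 2 / (4 * (a + 1 / (2 * σ ^ 2))))
      = (σ ^ 2 * b ^ 2 + 2 * b * m - 2 * a * m ^ 2) / (2 * (2 * a * σ ^ 2 + 1)) := by
    field_simp
    ring
  rw [← mul_assoc, pref, expeq]

theorem stmt_1 (ν1 ν2 σ0 c1 c2 : ℝ) (hσ0 : 0 < σ0) (hc1 : 0 ≤ c1) :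
    ∫ x, ∫ y, Real.exp (-c1 * (x - y) ^ 2 - c2 * (x - y) * (ν1 - ν2) / σ0 ^ 2)
        ∂(gaussianReal ν2 ⟨σ0 ^ 2, sq_nonneg σ0⟩)
        ∂(gaussianReal ν1 ⟨σ0 ^ 2, sq_nonneg σ0⟩)
      = (1 / Real.sqrt (4 * c1 * σ0 ^ 2 + 1)) *
        Real.exp (-((ν2 - ν1) ^ 2 * (c1 * σ0 ^ 2 - c2 ^ 2 + c2)) /
          (σ0 ^ 2 * (4 * c1 * σ0 ^ 2 + 1))) := by
  have hσ2 : (0:ℝ) < σ0 ^ 2 := pow_pos hσ0 2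
  have e1 : σ0 ≠ 0 := hσ0.ne'
  have e2 : (2 * c1 * σ0 ^ 2 + 1 : ℝ) ≠ 0 := by positivity
  have e3 : (4 * c1 * σ0 ^ 2 + 1 : ℝ) ≠ 0 := by positivity
  set k : ℝ := c2 * (ν1 - ν2) / σ0 ^ 2 with hk
  set D1 : ℝ := 2 * c1 * σ0 ^ 2 + 1 with hD1def
  have hD1 : (0:ℝ) < D1 := by rw [hD1def]; positivity
  have hD : (0:ℝ) < 4 * c1 * σ0 ^ 2 + 1 := by positivity
  have inner : ∀ x : ℝ,
      (∫ y, Real.exp (-c1 * (x - y) ^ 2 - c2 * (x - y) * (ν1 - ν2) / σ0 ^ 2)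
        ∂(gaussianReal ν2 ⟨σ0 ^ 2, sq_nonneg σ0⟩))
      = rexp (-(c1 / D1) * x ^ 2 + ((2 * c1 * ν2 - k) / D1) * x) *
        ((Real.sqrt D1)⁻¹ *
          rexp ((σ0 ^ 2 * k ^ 2 + 2 * k * ν2 - 2 * c1 * ν2 ^ 2) / (2 * D1))) := by
    intro x
    have step1 : (∫ y, Real.exp (-c1 * (x - y) ^ 2 - c2 * (x - y) * (ν1 - ν2) / σ0 ^ 2)
          ∂(gaussianReal ν2 ⟨σ0 ^ 2, sq_nonneg σ0⟩))
        = (∫ y, rexp (-c1 * y ^ 2 + (2 * c1 * x + k) * y)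
            ∂(gaussianReal ν2 ⟨σ0 ^ 2, sq_nonneg σ0⟩)) * rexp (-c1 * x ^ 2 - k * x) := by
      rw [← integral_mul_const]
      refine integral_congr_ae (Filter.Eventually.of_forall fun y => ?_)
      show rexp _ = rexp _ * rexp _
      rw [← Real.exp_add]
      congr 1
      rw [hk]
      field_simp
      ring
    rw [step1, gauss_int' ν2 σ0 c1 (2 * c1 * x + k) hσ0 hc1, ← hD1def]
    rw [mul_assoc, ← Real.exp_add,
      show rexp (-(c1 / D1) * x ^ 2 + ((2 * c1 * ν2 - k) / D1) * x) *
          ((Real.sqrt D1)⁻¹ *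
            rexp ((σ0 ^ 2 * k ^ 2 + 2 * k * ν2 - 2 * c1 * ν2 ^ 2) / (2 * D1)))
        = (Real.sqrt D1)⁻¹ * rexp (-(c1 / D1) * x ^ 2 + ((2 * c1 * ν2 - k) / D1) * x +
            (σ0 ^ 2 * k ^ 2 + 2 * k * ν2 - 2 * c1 * ν2 ^ 2) / (2 * D1)) from by
          rw [Real.exp_add (-(c1 / D1) * x ^ 2 + ((2 * c1 * ν2 - k) / D1) * x)]; ring]
    congr 1
    rw [hk, hD1def]
    field_simp
    ring
  rw [integral_congr_ae (Filter.Eventually.of_forall inner), integral_mul_const,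
    gauss_int' ν1 σ0 (c1 / D1) ((2 * c1 * ν2 - k) / D1) hσ0 (div_nonneg hc1 hD1.le)]
  have hq : 2 * (c1 / D1) * σ0 ^ 2 + 1 = (4 * c1 * σ0 ^ 2 + 1) / D1 := by
    rw [hD1def]; field_simp; ring
  rw [hq]
  have hs : (Real.sqrt ((4 * c1 * σ0 ^ 2 + 1) / D1))⁻¹ * (Real.sqrt D1)⁻¹
      = 1 / Real.sqrt (4 * c1 * σ0 ^ 2 + 1) := by
    rw [Real.sqrt_div hD.le, one_div]
    have h1 : Real.sqrt D1 ≠ 0 := ne_of_gt (Real.sqrt_pos.mpr hD1)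
    have h2 : Real.sqrt (4 * c1 * σ0 ^ 2 + 1) ≠ 0 := ne_of_gt (Real.sqrt_pos.mpr hD)
    field_simp
  calc (Real.sqrt ((4 * c1 * σ0 ^ 2 + 1) / D1))⁻¹ *
        rexp ((σ0 ^ 2 * ((2 * c1 * ν2 - k) / D1) ^ 2 + 2 * ((2 * c1 * ν2 - k) / D1) * ν1 -
          2 * (c1 / D1) * ν1 ^ 2) / (2 * ((4 * c1 * σ0 ^ 2 + 1) / D1))) *
        ((Real.sqrt D1)⁻¹ *
          rexp ((σ0 ^ 2 * k ^ 2 + 2 * k * ν2 - 2 * c1 * ν2 ^ 2) / (2 * D1)))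
      = ((Real.sqrt ((4 * c1 * σ0 ^ 2 + 1) / D1))⁻¹ * (Real.sqrt D1)⁻¹) *
        rexp ((σ0 ^ 2 * ((2 * c1 * ν2 - k) / D1) ^ 2 + 2 * ((2 * c1 * ν2 - k) / D1) * ν1 -
          2 * (c1 / D1) * ν1 ^ 2) / (2 * ((4 * c1 * σ0 ^ 2 + 1) / D1)) +
          (σ0 ^ 2 * k ^ 2 + 2 * k * ν2 - 2 * c1 * ν2 ^ 2) / (2 * D1)) := by
        rw [Real.exp_add ((σ0 ^ 2 * ((2 * c1 * ν2 - k) / D1) ^ 2 + 2 * ((2 * c1 * ν2 - k) / D1) * ν1 -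
          2 * (c1 / D1) * ν1 ^ 2) / (2 * ((4 * c1 * σ0 ^ 2 + 1) / D1)))]; ring
    _ = (1 / Real.sqrt (4 * c1 * σ0 ^ 2 + 1)) *
        Real.exp (-((ν2 - ν1) ^ 2 * (c1 * σ0 ^ 2 - c2 ^ 2 + c2)) /
          (σ0 ^ 2 * (4 * c1 * σ0 ^ 2 + 1))) := by
        rw [hs]
        congr 2
        rw [hk, hD1def]
        field_simp
        ring
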